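/- Let n ≥ 2, let 0 < φ < π/2, and let a, b ∈ ℝⁿ with dist a b = 2·cos φ. Then the Lebesgue volume of closedBall a 1 ∩ closedBall b 1 equals (π^{n/2}/Γ(1 + n/2)) · [1 − (2·Γ(1 + n/2)/(√π · Γ((n+1)/2))) · ∫₀^{cos φ} (1 − t²)^{(n−1)/2} dt]. (Equivalently, the bracketed subtrahend is (2Γ(1+n/2)/(√π Γ((n+1)/2))) · ₂F₁(1/2, (1−n)/2; 3/2; cos²φ) · cos φ.) -/

import Mathlib

/-!
Up to an isometry the two balls are centred at `±c • e₀` with `c = cos φ`, and their intersection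
is `{x | ‖x‖² + 2c|x₀| ≤ 1 - c²}`. By Cavalieri, its slice at `x₀ = t` is an `(n-1)`-ball of radius
`√(1 - (|t| + c)²)`, so the lens has volume `2 V_{n-1} ∫_c^1 (1 - s²)^((n-1)/2) ds`. For `c = 0`
the lens is the unit ball, which gives `V_n = 2 V_{n-1} ∫_0^1 (1 - s²)^((n-1)/2) ds`; subtracting
the two integrals yields the formula.
-/

open MeasureTheory Metric Real

theorem volume_setOf_sum_sq_le {m : ℕ} (hm : m ≠ 0) (K : ℝ) :
    volume {y : Fin m → ℝ | ∑ i, y i ^ 2 ≤ K} =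
      ENNReal.ofReal (√K ^ m * (√π ^ m / Gamma (m / 2 + 1))) := by
  have : Nonempty (Fin m) := Fin.pos_iff_nonempty.mp (Nat.pos_of_ne_zero hm)
  rcases lt_or_ge K 0 with hK | hK
  · have hempty : {y : Fin m → ℝ | ∑ i, y i ^ 2 ≤ K} = ∅ :=
      Set.eq_empty_of_forall_notMem fun y hy =>
        hK.not_ge ((Finset.sum_nonneg fun i _ => sq_nonneg (y i)).trans hy)
    rw [hempty, measure_empty, sqrt_eq_zero'.2 hK.le, zero_pow hm, zero_mul, ENNReal.ofReal_zero]
  · have hball : {y : Fin m → ℝ | ∑ i, y i ^ 2 ≤ K} =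
        WithLp.toLp 2 ⁻¹' closedBall (0 : EuclideanSpace ℝ (Fin m)) √K := by
      rw [EuclideanSpace.closedBall_zero_eq _ (sqrt_nonneg K), sq_sqrt hK]
      rfl
    rw [hball, (PiLp.volume_preserving_toLp (Fin m)).measure_preimage
      measurableSet_closedBall.nullMeasurableSet, EuclideanSpace.volume_closedBall,
      Fintype.card_fin, ← ENNReal.ofReal_pow (sqrt_nonneg K),
      ← ENNReal.ofReal_mul (by positivity)]

theorem volume_setOf_norm_sq_le_apply_zero {m : ℕ} (hm : m ≠ 0) {r : ℝ → ℝ} (hr : Measurable r) :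
    volume {x : EuclideanSpace ℝ (Fin (m + 1)) | ‖x‖ ^ 2 ≤ r (x 0)} =
      ∫⁻ t, ENNReal.ofReal (√(r t - t ^ 2) ^ m * (√π ^ m / Gamma (m / 2 + 1))) := by
  set S : Set (ℝ × (Fin m → ℝ)) := {p | p.1 ^ 2 + ∑ i, p.2 i ^ 2 ≤ r p.1}
  have hS : MeasurableSet S := measurableSet_le (by fun_prop) (hr.comp measurable_fst)
  have hpre : {x : EuclideanSpace ℝ (Fin (m + 1)) | ‖x‖ ^ 2 ≤ r (x 0)} =
      (MeasurableEquiv.piFinSuccAbove (fun _ => ℝ) 0 ∘ WithLp.ofLp) ⁻¹' S := by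
    ext x
    simp [S, EuclideanSpace.norm_sq_eq, Fin.sum_univ_succ, Fin.tail]
  rw [hpre, ((volume_preserving_piFinSuccAbove _ 0).comp
    (PiLp.volume_preserving_ofLp _)).measure_preimage hS.nullMeasurableSet,
    Measure.volume_eq_prod, Measure.prod_apply hS]
  refine lintegral_congr fun t => ?_
  rw [← volume_setOf_sum_sq_le hm]
  congr 1
  ext y
  simp only [S, Set.mem_preimage, Set.mem_ofPred_eq]
  constructor <;> intro <;> linarith

theorem integral_comp_abs_add {f : ℝ → ℝ} {c : ℝ} (hc : c ≤ 1) (hf : ∀ s, 1 ≤ s → f s = 0) :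
    ∫ t, f (|t| + c) = 2 * ∫ s in c..1, f s := by
  rw [integral_comp_abs (f := fun t => f (t + c)),
    setIntegral_eq_of_subset_of_forall_sdiff_eq_zero measurableSet_Ioi
      (Set.Ioc_subset_Ioi_self : Set.Ioc 0 (1 - c) ⊆ _),
    ← intervalIntegral.integral_of_le (by linarith), intervalIntegral.integral_comp_add_right,
    zero_add, sub_add_cancel]
  rintro t ⟨ht, hnot⟩
  rw [Set.mem_Ioc, not_and, not_le] at hnot
  exact hf _ (by linarith [hnot ht])

theorem lintegral_ofReal_comp_abs_add {f : ℝ → ℝ} (hf : Continuous f) (hf₀ : ∀ s, 0 ≤ f s)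
    {c : ℝ} (hc : c ≤ 1) (hf₁ : ∀ s, 1 ≤ s → f s = 0) :
    ∫⁻ t, ENNReal.ofReal (f (|t| + c)) = ENNReal.ofReal (2 * ∫ s in c..1, f s) := by
  have hint : Integrable fun t => f (|t| + c) := by
    refine (hf.comp (by fun_prop)).integrable_of_hasCompactSupport
      (HasCompactSupport.intro (isCompact_closedBall 0 (1 - c)) fun t ht => hf₁ _ ?_)
    rw [mem_closedBall_zero_iff, Real.norm_eq_abs, not_le] at ht
    linarith
  rw [← ofReal_integral_eq_lintegral_ofReal hint (Filter.Eventually.of_forall fun t => hf₀ _),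
    integral_comp_abs_add hc hf₁]

theorem closedBall_inter_closedBall_neg {E : Type*} [NormedAddCommGroup E]
    [InnerProductSpace ℝ E] (w : E) {r : ℝ} (hr : 0 ≤ r) :
    closedBall w r ∩ closedBall (-w) r = {x | ‖x‖ ^ 2 + 2 * |inner ℝ x w| ≤ r ^ 2 - ‖w‖ ^ 2} := by
  ext x
  simp only [Set.mem_inter_iff, mem_closedBall, dist_eq_norm, sub_neg_eq_add, Set.mem_ofPred_eq]
  rw [← sq_le_sq₀ (norm_nonneg _) hr, ← sq_le_sq₀ (norm_nonneg _) hr, norm_sub_sq_real,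
    norm_add_sq_real]
  constructor
  · rintro ⟨h₁, h₂⟩
    rcases abs_cases (inner ℝ x w) with ⟨h, -⟩ | ⟨h, -⟩ <;> rw [h] <;> linarith
  · intro h
    constructor <;> linarith [le_abs_self (inner ℝ x w), neg_abs_le (inner ℝ x w)]

section

variable {E : Type*} [NormedAddCommGroup E] [InnerProductSpace ℝ E] [FiniteDimensional ℝ E]
  [MeasurableSpace E] [BorelSpace E]

theorem volume_closedBall_inter_closedBall_congr {a b a' b' : E} (h : dist a b = dist a' b')
    (r : ℝ) :
    volume (closedBall a r ∩ closedBall b r) = volume (closedBall a' r ∩ closedBall b' r) := by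
  let L := Submodule.reflection (ℝ ∙ ((a - b) - (a' - b')))ᗮ
  have hL : L (a - b) = a' - b' :=
    Submodule.reflection_sub (by rwa [← dist_eq_norm, ← dist_eq_norm])
  let F : E → E := fun x => L (x - b) + b'
  have hF : MeasurePreserving F := (measurePreserving_add_right volume b').comp
    (L.measurePreserving.comp (measurePreserving_sub_right volume b))
  have hF_iso : Isometry F := Isometry.of_dist_eq fun x y => by
    simp only [F, dist_add_right, L.dist_map, dist_sub_right]
  have ha : F a = a' := by simp only [F, hL, sub_add_cancel]
  have hb : F b = b' := by simp only [F, sub_self, map_zero, zero_add]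
  have hpre : F ⁻¹' (closedBall a' r ∩ closedBall b' r) = closedBall a r ∩ closedBall b r := by
    rw [Set.preimage_inter, ← ha, ← hb, hF_iso.preimage_closedBall, hF_iso.preimage_closedBall]
  rw [← hpre,
    hF.measure_preimage (measurableSet_closedBall.inter measurableSet_closedBall).nullMeasurableSet]

end

theorem volume_closedBall_inter_closedBall_smul_single {m : ℕ} (hm : m ≠ 0) {c : ℝ}
    (hc₀ : 0 ≤ c) (hc₁ : c ≤ 1) :
    volume (closedBall (c • EuclideanSpace.single (0 : Fin (m + 1)) (1 : ℝ)) 1 ∩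
        closedBall (-(c • EuclideanSpace.single (0 : Fin (m + 1)) (1 : ℝ))) 1) =
      ENNReal.ofReal
        (√π ^ m / Gamma (m / 2 + 1) * (2 * ∫ s in c..1, (1 - s ^ 2) ^ ((m : ℝ) / 2))) := by
  set w := c • EuclideanSpace.single (0 : Fin (m + 1)) (1 : ℝ)
  have hw : ‖w‖ = c := by rw [norm_smul, PiLp.norm_single, norm_one, mul_one, norm_of_nonneg hc₀]
  have hlens : closedBall w 1 ∩ closedBall (-w) 1 =
      {x | ‖x‖ ^ 2 ≤ 1 - c ^ 2 - 2 * c * |x 0|} := by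
    rw [closedBall_inter_closedBall_neg w zero_le_one, hw]
    ext x
    simp only [Set.mem_ofPred_eq, w, real_inner_smul_right, EuclideanSpace.inner_single_right,
      abs_mul, abs_of_nonneg hc₀, conj_trivial, one_mul, one_pow]
    constructor <;> intro <;> linarith
  have hslice (t : ℝ) : 1 - c ^ 2 - 2 * c * |t| - t ^ 2 = 1 - (|t| + c) ^ 2 := by
    rw [add_sq, sq_abs]; ring
  rw [hlens, volume_setOf_norm_sq_le_apply_zero hm (r := fun t => 1 - c ^ 2 - 2 * c * |t|)
    (by fun_prop)]
  simp_rw [hslice]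
  rw [lintegral_ofReal_comp_abs_add
    (f := fun s => √(1 - s ^ 2) ^ m * (√π ^ m / Gamma (m / 2 + 1))) (by fun_prop)
    (fun s => by positivity) hc₁ ?_, intervalIntegral.integral_mul_const]
  · have hpow : ∫ s in c..1, √(1 - s ^ 2) ^ m = ∫ s in c..1, (1 - s ^ 2) ^ ((m : ℝ) / 2) := by
      refine intervalIntegral.integral_congr fun s hs => ?_
      rw [Set.uIcc_of_le hc₁] at hs
      rw [rpow_div_two_eq_sqrt _ (by nlinarith [hs.1, hs.2]), rpow_natCast]
    rw [hpow]
    congr 1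
    ring
  · intro s hs
    rw [sqrt_eq_zero'.2 (by nlinarith), zero_pow hm, zero_mul]

theorem sqrt_pi_pow_succ_div_Gamma_eq_mul_integral {m : ℕ} (hm : m ≠ 0) :
    √π ^ (m + 1) / Gamma ((m + 1 : ℕ) / 2 + 1) =
      √π ^ m / Gamma (m / 2 + 1) * (2 * ∫ s in (0 : ℝ)..1, (1 - s ^ 2) ^ ((m : ℝ) / 2)) := by
  have hball := volume_closedBall_inter_closedBall_smul_single hm le_rfl zero_le_one
  rw [zero_smul, neg_zero, Set.inter_self, EuclideanSpace.volume_closedBall, ENNReal.ofReal_one,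
    one_pow, one_mul, Fintype.card_fin] at hball
  have hint : 0 ≤ ∫ s in (0 : ℝ)..1, (1 - s ^ 2) ^ ((m : ℝ) / 2) :=
    intervalIntegral.integral_nonneg zero_le_one fun s hs =>
      rpow_nonneg (by nlinarith [hs.1, hs.2]) _
  exact (ENNReal.ofReal_eq_ofReal_iff (by positivity) (by positivity)).1 hball

theorem sqrt_pi_pow_div_Gamma_mul_integral_eq {m : ℕ} (hm : m ≠ 0) (c : ℝ) :
    √π ^ m / Gamma (m / 2 + 1) * (2 * ∫ s in c..1, (1 - s ^ 2) ^ ((m : ℝ) / 2)) =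
      √π ^ (m + 1) / Gamma ((m + 1 : ℕ) / 2 + 1) *
        (1 - 2 * Gamma ((m + 1 : ℕ) / 2 + 1) / (√π * Gamma (m / 2 + 1)) *
          ∫ s in (0 : ℝ)..c, (1 - s ^ 2) ^ ((m : ℝ) / 2)) := by
  have hf : Continuous fun s : ℝ => (1 - s ^ 2) ^ ((m : ℝ) / 2) :=
    (by fun_prop : Continuous fun s : ℝ => 1 - s ^ 2).rpow_const fun _ => Or.inr (by positivity)
  have hsplit := intervalIntegral.integral_add_adjacent_intervals
    (hf.intervalIntegrable (μ := volume) 0 c) (hf.intervalIntegrable c 1)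
  have hΓ₀ : 0 < Gamma (m / 2 + 1) := Gamma_pos_of_pos (by positivity)
  have hΓ₁ : 0 < Gamma ((m + 1 : ℕ) / 2 + 1) := Gamma_pos_of_pos (by positivity)
  have hcancel : √π ^ (m + 1) / Gamma ((m + 1 : ℕ) / 2 + 1) *
      (2 * Gamma ((m + 1 : ℕ) / 2 + 1) / (√π * Gamma (m / 2 + 1))) =
        2 * (√π ^ m / Gamma (m / 2 + 1)) := by
    field_simp
    ring
  linear_combination (2 * (√π ^ m / Gamma (m / 2 + 1))) * hsplit -
    sqrt_pi_pow_succ_div_Gamma_eq_mul_integral hm +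
    (∫ s in (0 : ℝ)..c, (1 - s ^ 2) ^ ((m : ℝ) / 2)) * hcancel

theorem lens_volume_dim_n_general (n : ℕ) (hn : 2 ≤ n) (φ : ℝ)
    (a b : EuclideanSpace ℝ (Fin n)) (h : dist a b = 2 * Real.cos φ) :
    volume (closedBall a 1 ∩ closedBall b 1) =
      ENNReal.ofReal
        ((π ^ ((n : ℝ) / 2) / Real.Gamma (1 + (n : ℝ) / 2)) *
          (1 - (2 * Real.Gamma (1 + (n : ℝ) / 2) /
              (Real.sqrt π * Real.Gamma (((n : ℝ) + 1) / 2))) *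
            ∫ t in (0 : ℝ)..(Real.cos φ), (1 - t ^ 2) ^ (((n : ℝ) - 1) / 2))) := by
  obtain ⟨m, rfl⟩ : ∃ m, n = m + 1 := ⟨n - 1, by omega⟩
  have hcos : 0 ≤ cos φ := by linarith [dist_nonneg (x := a) (y := b)]
  set w := cos φ • EuclideanSpace.single (0 : Fin (m + 1)) (1 : ℝ)
  have hw : dist a b = dist w (-w) := by
    rw [h, dist_eq_norm, sub_neg_eq_add, ← two_smul ℝ, norm_smul, norm_smul, PiLp.norm_single,
      norm_one, mul_one, norm_two, norm_of_nonneg hcos]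
  rw [volume_closedBall_inter_closedBall_congr hw,
    volume_closedBall_inter_closedBall_smul_single (by omega) hcos (cos_le_one φ),
    sqrt_pi_pow_div_Gamma_mul_integral_eq (by omega), rpow_div_two_eq_sqrt _ pi_pos.le,
    rpow_natCast, add_comm 1, Nat.cast_add_one m, add_sub_cancel_right,
    show ((m : ℝ) + 1 + 1) / 2 = m / 2 + 1 by ring]

theorem lens_volume_dim_n (n : ℕ) (hn : 2 ≤ n) (φ : ℝ) (hφ₀ : 0 < φ) (hφ₂ : φ < π / 2)
    (a b : EuclideanSpace ℝ (Fin n)) (h : dist a b = 2 * Real.cos φ) :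
    volume (closedBall a 1 ∩ closedBall b 1) =
      ENNReal.ofReal
        ((π ^ ((n : ℝ) / 2) / Real.Gamma (1 + (n : ℝ) / 2)) *
          (1 - (2 * Real.Gamma (1 + (n : ℝ) / 2) /
              (Real.sqrt π * Real.Gamma (((n : ℝ) + 1) / 2))) *
            ∫ t in (0 : ℝ)..(Real.cos φ), (1 - t ^ 2) ^ (((n : ℝ) - 1) / 2))) :=
  lens_volume_dim_n_general n hn φ a b h
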